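/- Fix α ≥ 0 and t > 0. For all x, y > 0, the mixed partial derivative ∂²/∂x∂y of log p_t(x,y) is nonnegative, where p_t is the index-α Bessel transition density. -/

import Mathlib

/-- `h_α(z) = 2^{-α} ∑_{n≥0} (z/2)^{2n}/(n! Γ(n+α+1))`. -/
noncomputable def hA (α z : ℝ) : ℝ :=
  (2 : ℝ) ^ (-α) * ∑' n : ℕ, (z / 2) ^ (2 * n) / ((n.factorial : ℝ) * Real.Gamma ((n : ℝ) + α + 1))

/-- The index-`α` Bessel transition density:
`p_t(x,y) = t^{-α-1} y^{2α+1} e^{-(x²+y²)/(2t)} h_α(xy/t)`. -/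
noncomputable def pBES (α t x y : ℝ) : ℝ :=
  t ^ (-α - 1) * y ^ (2 * α + 1) * Real.exp (-(x ^ 2 + y ^ 2) / (2 * t)) * hA α (x * y / t)

/-! With `w = (xy/2t)²` one has `h_α(xy/t) = 2^{-α} S₀(w)`, where `S_k(w) = ∑ nᵏ aₙ wⁿ` with
`aₙ = 1/(n! Γ(n+α+1)) > 0`, and `w S_k'(w) = S_{k+1}(w)`. Since `∂_y w = 2w/y` and `∂_x w = 2w/x`,
`∂_y log p_t = (2α+1)/y - y/t + (2/y) S₁/S₀` and `∂_x ∂_y log p_t = 4 (S₀ S₂ - S₁²) / (x y S₀²)`.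
The numerator is nonnegative by Cauchy–Schwarz for the positive weights `aₙ wⁿ`: it is `S₀²` times
the variance of `n` under them. -/

open Real Filter Topology

noncomputable def momentSeries (a : ℕ → ℝ) (k : ℕ) (w : ℝ) : ℝ :=
  ∑' n : ℕ, (n : ℝ) ^ k * a n * w ^ n

section MomentSeries

variable {a : ℕ → ℝ}

theorem summable_natCast_pow_mul_mul_pow (ha : ∀ r, Summable fun n => a n * r ^ n) (k : ℕ)
    (w : ℝ) : Summable fun n : ℕ => (n : ℝ) ^ k * a n * w ^ n := by
  have hgeom := summable_pow_mul_geometric_of_norm_lt_one (R := ℝ) k (r := 1 / 2) (by norm_num)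
  refine .of_norm_bounded ((summable_abs_iff.mpr (ha (2 * |w|))).mul_left
    (∑' n : ℕ, (n : ℝ) ^ k * (1 / 2) ^ n)) fun n => ?_
  have half : (1 / 2 : ℝ) ^ n * 2 ^ n = 1 := by rw [← mul_pow]; norm_num
  calc ‖(n : ℝ) ^ k * a n * w ^ n‖ = (n : ℝ) ^ k * (1 / 2) ^ n * |a n * (2 * |w|) ^ n| := by
        simp only [norm_mul, norm_pow, Real.norm_eq_abs, abs_mul, abs_pow, abs_abs, abs_two,
          Nat.abs_cast, mul_pow]
        linear_combination (-((n : ℝ) ^ k * |a n| * |w| ^ n)) * half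
    _ ≤ _ := by
        gcongr
        exact hgeom.le_tsum n fun _ _ => by positivity

theorem hasDerivAt_momentSeries (ha : ∀ r, Summable fun n => a n * r ^ n) (k : ℕ) {w : ℝ}
    (hw : w ≠ 0) : HasDerivAt (momentSeries a k) (momentSeries a (k + 1) w / w) w := by
  set R := |w| + 1
  have hR : 0 < R := by positivity
  have hbound : Summable fun n : ℕ => (n : ℝ) ^ (k + 1) * |a n| * R ^ (n - 1) := by
    refine ((summable_abs_iff.mpr (summable_natCast_pow_mul_mul_pow ha (k + 1) R)).div_const
      R).congr fun n => ?_
    rcases n with _ | n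
    · simp
    · rw [abs_mul, abs_mul, abs_of_pos (pow_pos hR _), abs_of_nonneg (by positivity), pow_succ R]
      field_simp
      simp
  have hderiv := hasDerivAt_tsum_of_isPreconnected hbound Metric.isOpen_ball
    (convex_ball (0 : ℝ) R).isPreconnected
    (g := fun (n : ℕ) v => (n : ℝ) ^ k * a n * v ^ n)
    (g' := fun (n : ℕ) v => (n : ℝ) ^ k * a n * ((n : ℝ) * v ^ (n - 1)))
    (fun n v _ => (hasDerivAt_pow n v).const_mul _)
    (fun n v hv => ?_) (Metric.mem_ball_self hR) (summable_natCast_pow_mul_mul_pow ha k 0)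
    (y := w) (by simp [R])
  · refine hderiv.congr_deriv ?_
    rw [momentSeries, ← tsum_div_const]
    refine tsum_congr fun n => ?_
    rcases n with _ | n
    · simp
    · field_simp
      simp only [Nat.cast_add, Nat.cast_one, add_tsub_cancel_right, pow_succ]
      ring
  · rw [Metric.mem_ball, dist_zero_right, Real.norm_eq_abs] at hv
    simp only [norm_mul, norm_pow, Real.norm_eq_abs, Nat.abs_cast, pow_succ]
    calc (n : ℝ) ^ k * |a n| * (n * |v| ^ (n - 1)) = (n : ℝ) ^ k * n * |a n| * |v| ^ (n - 1) := by
          ring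
      _ ≤ _ := by gcongr

theorem momentSeries_zero_pos (ha : ∀ r, Summable fun n => a n * r ^ n) (ha₀ : ∀ n, 0 ≤ a n)
    (h0 : 0 < a 0) {w : ℝ} (hw : 0 ≤ w) : 0 < momentSeries a 0 w :=
  calc 0 < a 0 := h0
    _ = (0 : ℕ) ^ 0 * a 0 * w ^ 0 := by simp
    _ ≤ momentSeries a 0 w :=
        (summable_natCast_pow_mul_mul_pow ha 0 w).le_tsum 0 fun n _ =>
          mul_nonneg (mul_nonneg (by positivity) (ha₀ n)) (pow_nonneg hw n)

theorem sq_momentSeries_one_le (ha : ∀ r, Summable fun n => a n * r ^ n) (ha₀ : ∀ n, 0 ≤ a n)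
    {w : ℝ} (hw : 0 ≤ w) :
    momentSeries a 1 w ^ 2 ≤ momentSeries a 0 w * momentSeries a 2 w := by
  have hquad : ∀ c : ℝ, 0 ≤ momentSeries a 0 w * (c * c) + (-2 * momentSeries a 1 w) * c
      + momentSeries a 2 w := by
    intro c
    -- the quadratic is `∑ (n - c)² aₙ wⁿ`
    have hsum := (((summable_natCast_pow_mul_mul_pow ha 0 w).hasSum.mul_left (c * c)).add
      ((summable_natCast_pow_mul_mul_pow ha 1 w).hasSum.mul_left (-2 * c))).add
      (summable_natCast_pow_mul_mul_pow ha 2 w).hasSum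
    refine (hsum.nonneg fun n => ?_).trans_eq (by rw [momentSeries, momentSeries, momentSeries]; ring)
    calc (0 : ℝ) ≤ (n - c) ^ 2 * a n * w ^ n :=
          mul_nonneg (mul_nonneg (sq_nonneg _) (ha₀ n)) (pow_nonneg hw n)
      _ = _ := by ring
  have := discrim_le_zero hquad
  rw [discrim] at this
  nlinarith

theorem hasDerivAt_momentSeries_one_div_zero (ha : ∀ r, Summable fun n => a n * r ^ n)
    {w : ℝ} (hw : w ≠ 0) (h0 : momentSeries a 0 w ≠ 0) :
    HasDerivAt (fun v => momentSeries a 1 v / momentSeries a 0 v)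
      ((momentSeries a 0 w * momentSeries a 2 w - momentSeries a 1 w ^ 2) /
        (w * momentSeries a 0 w ^ 2)) w := by
  refine ((hasDerivAt_momentSeries ha 1 hw).div (hasDerivAt_momentSeries ha 0 hw) h0).congr_deriv ?_
  field_simp

end MomentSeries

noncomputable def besselCoeff (α : ℝ) (n : ℕ) : ℝ :=
  ((n.factorial : ℝ) * Gamma (n + α + 1))⁻¹

theorem besselCoeff_pos {α : ℝ} (hα : -1 < α) (n : ℕ) : 0 < besselCoeff α n := by
  have : 0 < (n : ℝ) + α + 1 := by linarith [n.cast_nonneg (α := ℝ)]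
  unfold besselCoeff
  have := Gamma_pos_of_pos this
  positivity

theorem Gamma_add_one_le_Gamma_nat_add_add_one {α : ℝ} (hα : 0 ≤ α) (n : ℕ) :
    Gamma (α + 1) ≤ Gamma (n + α + 1) := by
  induction n with
  | zero => simp
  | succ n ih =>
    have hpos : 0 < (n : ℝ) + α + 1 := by positivity
    calc Gamma (α + 1) ≤ Gamma (n + α + 1) := ih
      _ ≤ (n + α + 1) * Gamma (n + α + 1) :=
          le_mul_of_one_le_left (Gamma_pos_of_pos hpos).le (by linarith [n.cast_nonneg (α := ℝ)])
      _ = Gamma ((n + 1 : ℕ) + α + 1) := by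
          rw [← Gamma_add_one hpos.ne']
          push_cast
          ring_nf

theorem summable_besselCoeff_mul_pow {α : ℝ} (hα : 0 ≤ α) (r : ℝ) :
    Summable fun n => besselCoeff α n * r ^ n := by
  have hΓ : 0 < Gamma (α + 1) := Gamma_pos_of_pos (by linarith)
  refine .of_norm_bounded ((Real.summable_pow_div_factorial |r|).mul_left (Gamma (α + 1))⁻¹)
    fun n => ?_
  calc ‖besselCoeff α n * r ^ n‖ = |r| ^ n / (n.factorial * Gamma (n + α + 1)) := by
        rw [norm_mul, norm_pow, Real.norm_eq_abs, Real.norm_eq_abs,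
          abs_of_pos (besselCoeff_pos (by linarith) n), besselCoeff, inv_mul_eq_div]
    _ ≤ |r| ^ n / (n.factorial * Gamma (α + 1)) := by
        gcongr
        exact Gamma_add_one_le_Gamma_nat_add_add_one hα n
    _ = (Gamma (α + 1))⁻¹ * (|r| ^ n / n.factorial) := by
        field_simp

theorem momentSeries_besselCoeff_zero_pos {α : ℝ} (hα : 0 ≤ α) {w : ℝ} (hw : 0 ≤ w) :
    0 < momentSeries (besselCoeff α) 0 w :=
  momentSeries_zero_pos (summable_besselCoeff_mul_pow hα)
    (fun n => (besselCoeff_pos (by linarith) n).le) (besselCoeff_pos (by linarith) 0) hw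

theorem hA_eq_momentSeries (α z : ℝ) :
    hA α z = 2 ^ (-α) * momentSeries (besselCoeff α) 0 ((z / 2) ^ 2) := by
  rw [hA, momentSeries]
  congr 1
  refine tsum_congr fun n => ?_
  rw [besselCoeff, pow_mul]
  ring

section BesselDensity

variable {α t : ℝ}

theorem log_pBES_eq (hα : 0 ≤ α) (ht : 0 < t) (x : ℝ) {y : ℝ} (hy : 0 < y) :
    log (pBES α t x y) = (-α - 1) * log t - α * log 2 + (2 * α + 1) * log y
      - (x ^ 2 + y ^ 2) / (2 * t) + log (momentSeries (besselCoeff α) 0 ((x * y / t / 2) ^ 2)) := by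
  have hS := momentSeries_besselCoeff_zero_pos hα (sq_nonneg (x * y / t / 2))
  have ht' : 0 < t ^ (-α - 1) := by positivity
  have hy' : 0 < y ^ (2 * α + 1) := by positivity
  rw [pBES, hA_eq_momentSeries, log_mul (by positivity) (by positivity),
    log_mul (mul_pos ht' hy').ne' (exp_pos _).ne', log_mul ht'.ne' hy'.ne',
    log_mul (by positivity) hS.ne', log_rpow ht, log_rpow hy, log_rpow two_pos, log_exp]
  ring

theorem hasDerivAt_log_pBES_snd (hα : 0 ≤ α) (ht : 0 < t) {x y : ℝ} (hx : x ≠ 0) (hy : 0 < y) :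
    HasDerivAt (fun y' => log (pBES α t x y'))
      ((2 * α + 1) / y - y / t + 2 / y * (momentSeries (besselCoeff α) 1 ((x * y / t / 2) ^ 2) /
        momentSeries (besselCoeff α) 0 ((x * y / t / 2) ^ 2))) y := by
  have ha := summable_besselCoeff_mul_pow hα
  have hw : (x * y / t / 2) ^ 2 ≠ 0 := by positivity
  have hS := momentSeries_besselCoeff_zero_pos hα (sq_nonneg (x * y / t / 2))
  have hinner : HasDerivAt (fun y' => (x * y' / t / 2) ^ 2) (2 * (x * y / t / 2) * (x / t / 2)) y :=
    ((((hasDerivAt_id y).const_mul x).div_const t).div_const 2 |>.pow 2).congr_deriv (by simp)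
  have hS_comp : HasDerivAt (fun y' => momentSeries (besselCoeff α) 0 ((x * y' / t / 2) ^ 2))
      (momentSeries (besselCoeff α) 1 ((x * y / t / 2) ^ 2) / (x * y / t / 2) ^ 2 *
        (2 * (x * y / t / 2) * (x / t / 2))) y :=
    HasDerivAt.comp (h₂ := momentSeries (besselCoeff α) 0) y (hasDerivAt_momentSeries ha 0 hw) hinner
  have hformula := ((((hasDerivAt_log hy.ne').const_mul (2 * α + 1)).const_add
    ((-α - 1) * log t - α * log 2)).sub
      (((hasDerivAt_pow 2 y).const_add (x ^ 2)).div_const (2 * t))).add (hS_comp.log hS.ne')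
  refine (hformula.congr_of_eventuallyEq ?_).congr_deriv ?_
  · filter_upwards [Ioi_mem_nhds hy] with y' hy' using log_pBES_eq hα ht x hy'
  · field_simp
    ring

end BesselDensity

/-- For `α ≥ 0`, `t > 0` and `x, y > 0`, the mixed partial derivative
`∂²/∂x∂y log p_t(x,y)` is nonnegative. -/
theorem stmt12 (α : ℝ) (hα : 0 ≤ α) (t : ℝ) (ht : 0 < t) (x y : ℝ) (hx : 0 < x) (hy : 0 < y) :
    0 ≤ deriv (fun x' => deriv (fun y' => Real.log (pBES α t x' y')) y) x := by
  have ha := summable_besselCoeff_mul_pow hα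
  have hw : 0 < (x * y / t / 2) ^ 2 := by positivity
  have hS := momentSeries_besselCoeff_zero_pos hα hw.le
  have hinner : (fun x' => deriv (fun y' => log (pBES α t x' y')) y) =ᶠ[𝓝 x]
      fun x' => (2 * α + 1) / y - y / t + 2 / y *
        (momentSeries (besselCoeff α) 1 ((x' * y / t / 2) ^ 2) /
          momentSeries (besselCoeff α) 0 ((x' * y / t / 2) ^ 2)) := by
    filter_upwards [Ioi_mem_nhds hx] with x' hx' using
      (hasDerivAt_log_pBES_snd hα ht hx'.ne' hy).deriv
  have hw' : HasDerivAt (fun x' => (x' * y / t / 2) ^ 2) (2 * (x * y / t / 2) * (y / t / 2)) x :=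
    ((((hasDerivAt_id x).mul_const y).div_const t).div_const 2 |>.pow 2).congr_deriv (by simp)
  have hratio : HasDerivAt (fun x' => momentSeries (besselCoeff α) 1 ((x' * y / t / 2) ^ 2) /
      momentSeries (besselCoeff α) 0 ((x' * y / t / 2) ^ 2)) _ x := HasDerivAt.comp
    (h₂ := fun w => momentSeries (besselCoeff α) 1 w / momentSeries (besselCoeff α) 0 w) x
    (hasDerivAt_momentSeries_one_div_zero ha hw.ne' hS.ne') hw'
  rw [hinner.deriv_eq, ((hratio.const_mul (2 / y)).const_add _).deriv]
  have hCS := sq_momentSeries_one_le ha (fun n => (besselCoeff_pos (by linarith) n).le) hw.le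
  exact mul_nonneg (by positivity) <| mul_nonneg (div_nonneg (by linarith) (by positivity))
    (by positivity)
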